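/- Let v₁=(1,0,1), v₂=(0,1,1), v₃=(-2,-1,1), v₄=(1,-1,1) in ℤ³ (type 7b). For each of the integer vectors u = (0,0,c,0) with c = 1,2,3,4,5,6, there exists y ∈ ℝ³ such that uᵢ − 1 < ⟨y, vᵢ⟩ ≤ uᵢ for all i = 1,…,4. (Witnesses: y = (−1/4,−1/4,−1/2), (−1/2,−1/2,−3/8), (−7/8,−1/2,1/4), (−5/4,−1/2,3/8), (−13/8,−7/8,3/4), (−29/16,−7/8,7/8) respectively.) Hence the divisorial ideals T(0,0,c,0) for c = 1,…,6 over the toric singularity of type 7b are conic. -/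

import Mathlib

/-- The pairing ⟨y, v⟩ = ∑ⱼ yⱼ vⱼ of a real vector y ∈ ℝ³ with an integer vector v ∈ ℤ³. -/
noncomputable def pair3 (y : Fin 3 → ℝ) (v : Fin 3 → ℤ) : ℝ :=
  ∑ j, y j * (v j : ℝ)

/-- `u ∈ ℤⁿ` is conic with respect to `v₁,…,vₙ ∈ ℤ³` if there is `y ∈ ℝ³` with
`uᵢ − 1 < ⟨y, vᵢ⟩ ≤ uᵢ` for all `i`.  By Bruns' criterion this holds iff the
divisorial ideal `T(u)` over the associated toric singularity is conic. -/
def IsConic {n : ℕ} (v : Fin n → Fin 3 → ℤ) (u : Fin n → ℤ) : Prop :=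
  ∃ y : Fin 3 → ℝ, ∀ i, (u i : ℝ) - 1 < pair3 y (v i) ∧ pair3 y (v i) ≤ (u i : ℝ)

/-- The ray generators of type 7b: v1=(1,0,1), v2=(0,1,1), v3=(-2,-1,1), v4=(1,-1,1). -/
def type7b : Fin 4 → Fin 3 → ℤ :=
  ![![1, 0, 1], ![0, 1, 1], ![-2, -1, 1], ![1, -1, 1]]

theorem pair3_apply (y : Fin 3 → ℝ) (v : Fin 3 → ℤ) :
    pair3 y v = y 0 * v 0 + y 1 * v 1 + y 2 * v 2 :=
  Fin.sum_univ_three _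

theorem isConic_type7b_of_bounds (p q r s : ℤ) (a b c : ℝ)
    (h₀ : (p : ℝ) - 1 < a + c ∧ a + c ≤ p)
    (h₁ : (q : ℝ) - 1 < b + c ∧ b + c ≤ q)
    (h₂ : (r : ℝ) - 1 < -2 * a - b + c ∧ -2 * a - b + c ≤ r)
    (h₃ : (s : ℝ) - 1 < a - b + c ∧ a - b + c ≤ s) :
    IsConic type7b ![p, q, r, s] := by
  refine ⟨![a, b, c], fun i => ?_⟩
  fin_cases i <;>
  · simp only [type7b, pair3_apply, Fin.zero_eta, Fin.mk_one, Fin.reduceFinMk, Fin.isValue,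
      Matrix.cons_val, Matrix.cons_val_zero, Matrix.cons_val_one, Int.reduceNeg, Int.cast_zero,
      Int.cast_one, Int.cast_neg, Int.cast_ofNat, mul_zero, mul_one, mul_neg, add_zero, zero_add]
    constructor <;> linarith

theorem type7b_conics :
    IsConic type7b ![0, 0, 1, 0] ∧
      IsConic type7b ![0, 0, 2, 0] ∧
      IsConic type7b ![0, 0, 3, 0] ∧
      IsConic type7b ![0, 0, 4, 0] ∧
      IsConic type7b ![0, 0, 5, 0] ∧
      IsConic type7b ![0, 0, 6, 0] := by
  refine ⟨isConic_type7b_of_bounds _ _ _ _ (-1/4) (-1/4) (-1/2) ?_ ?_ ?_ ?_,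
    isConic_type7b_of_bounds _ _ _ _ (-1/2) (-1/2) (-3/8) ?_ ?_ ?_ ?_,
    isConic_type7b_of_bounds _ _ _ _ (-7/8) (-1/2) (1/4) ?_ ?_ ?_ ?_,
    isConic_type7b_of_bounds _ _ _ _ (-5/4) (-1/2) (3/8) ?_ ?_ ?_ ?_,
    isConic_type7b_of_bounds _ _ _ _ (-13/8) (-7/8) (3/4) ?_ ?_ ?_ ?_,
    isConic_type7b_of_bounds _ _ _ _ (-29/16) (-7/8) (7/8) ?_ ?_ ?_ ?_⟩ <;>
  norm_num
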